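/- The Lenard–Bernstein/Dougherty collision operator conserves energy: ∫ (v∥²/2 + μB/m) J C[f] dv∥ dμ = 0, provided u∥ and v_t are defined by n u∥ = ∫ J v∥ f dw and n u∥² + 3 n v_t² = ∫ J (v∥² + 2μB/m) f dw with n = ∫ J f dw. -/

import Mathlib

open MeasureTheory

noncomputable section

/-- The Lenard–Bernstein/Dougherty collision operator, including the Jacobian. -/
def LBO (ν u vt m B J : ℝ) (f : ℝ × ℝ → ℝ) (p : ℝ × ℝ) : ℝ :=
  ν * (deriv (fun v => (v - u) * (J * f (v, p.2))
          + vt ^ 2 * deriv (fun w => J * f (w, p.2)) v) p.1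
    + deriv (fun μ => 2 * μ * (J * f (p.1, μ))
          + 2 * μ * (m / B) * vt ^ 2 * deriv (fun w => J * f (p.1, w)) μ) p.2)

section Aux
open Set Function

lemma aux_hasDerivAt_fst {G : ℝ × ℝ → ℝ} (hG : Differentiable ℝ G) (v μ : ℝ) :
    HasDerivAt (fun w => G (w, μ)) (fderiv ℝ G (v, μ) (1, 0)) v := by
  have h1 : HasDerivAt (fun w : ℝ => (w, μ)) ((1 : ℝ), (0 : ℝ)) v :=
    HasDerivAt.prodMk (hasDerivAt_id v) (hasDerivAt_const v μ)
  exact (hG (v, μ)).hasFDerivAt.comp_hasDerivAt v h1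

lemma aux_hasDerivAt_snd {G : ℝ × ℝ → ℝ} (hG : Differentiable ℝ G) (v μ : ℝ) :
    HasDerivAt (fun w => G (v, w)) (fderiv ℝ G (v, μ) (0, 1)) μ := by
  have h1 : HasDerivAt (fun w : ℝ => (v, w)) ((0 : ℝ), (1 : ℝ)) μ :=
    HasDerivAt.prodMk (hasDerivAt_const μ v) (hasDerivAt_id μ)
  exact (hG (v, μ)).hasFDerivAt.comp_hasDerivAt μ h1

lemma aux_contDiff_pd {G : ℝ × ℝ → ℝ} (hG : ContDiff ℝ ((⊤ : ℕ∞) : WithTop ℕ∞) G)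
    (w : ℝ × ℝ) : ContDiff ℝ ((⊤ : ℕ∞) : WithTop ℕ∞) fun p => fderiv ℝ G p w :=
  (contDiff_infty_iff_fderiv.1 hG).2.clm_apply contDiff_const

lemma aux_isometry_fst (μ : ℝ) : Isometry (fun v : ℝ => (v, μ)) := by
  intro a b; simp [Prod.edist_eq]

lemma aux_isometry_snd (v : ℝ) : Isometry (fun w : ℝ => (v, w)) := by
  intro a b; simp [Prod.edist_eq]

lemma aux_slice_supp_fst {G : ℝ × ℝ → ℝ} (hG : HasCompactSupport G) (μ : ℝ) :
    HasCompactSupport fun v => G (v, μ) :=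
  hG.comp_isClosedEmbedding (aux_isometry_fst μ).isClosedEmbedding

lemma aux_slice_supp_snd {G : ℝ × ℝ → ℝ} (hG : HasCompactSupport G) (v : ℝ) :
    HasCompactSupport fun w => G (v, w) :=
  hG.comp_isClosedEmbedding (aux_isometry_snd v).isClosedEmbedding

lemma aux_slice_contDiff_fst {G : ℝ × ℝ → ℝ} (hG : ContDiff ℝ ((⊤ : ℕ∞) : WithTop ℕ∞) G)
    (μ : ℝ) : ContDiff ℝ 1 fun v => G (v, μ) :=
  (hG.comp (contDiff_id.prodMk contDiff_const)).of_le (by exact_mod_cast le_top)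

lemma aux_slice_contDiff_snd {G : ℝ × ℝ → ℝ} (hG : ContDiff ℝ ((⊤ : ℕ∞) : WithTop ℕ∞) G)
    (v : ℝ) : ContDiff ℝ 1 fun w => G (v, w) :=
  (hG.comp (contDiff_const.prodMk contDiff_id)).of_le (by exact_mod_cast le_top)

lemma aux_integral_deriv_zero {h : ℝ → ℝ} (hh : ContDiff ℝ 1 h) (hs : HasCompactSupport h) :
    ∫ x : ℝ, deriv h x = 0 := by
  have hi : Integrable (deriv h) :=
    (hh.continuous_deriv le_rfl).integrable_of_hasCompactSupport hs.deriv
  have := integral_add_compl measurableSet_Iic hi (s := Set.Iic (0 : ℝ))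
  rw [← this, Set.compl_Iic, HasCompactSupport.integral_Iic_deriv_eq hh hs 0,
    HasCompactSupport.integral_Ioi_deriv_eq hh hs 0]
  ring

lemma aux_integral_Ici_deriv {h : ℝ → ℝ} (hh : ContDiff ℝ 1 h) (hs : HasCompactSupport h) :
    ∫ x in Set.Ici (0 : ℝ), deriv h x = - h 0 := by
  rw [integral_Ici_eq_integral_Ioi]
  exact HasCompactSupport.integral_Ioi_deriv_eq hh hs 0

lemma aux_integrable_pi {G : ℝ × ℝ → ℝ} (hc : Continuous G) (hs : HasCompactSupport G) :
    Integrable G ((volume : Measure ℝ).prod ((volume : Measure ℝ).restrict (Set.Ici 0))) := by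
  have h1 : Integrable G (volume : Measure (ℝ × ℝ)) := hc.integrable_of_hasCompactSupport hs
  have h2 : (volume : Measure ℝ).prod ((volume : Measure ℝ).restrict (Set.Ici 0))
      = (volume : Measure (ℝ × ℝ)).restrict (Set.univ ×ˢ Set.Ici 0) := by
    rw [Measure.volume_eq_prod, ← Measure.prod_restrict, Measure.restrict_univ]
  rw [h2]
  exact h1.restrict

lemma aux_hcs {fG h : ℝ × ℝ → ℝ} (hfG : HasCompactSupport fG)
    (hz : ∀ p, fG p = 0 → h p = 0) : HasCompactSupport h :=
  hfG.mono' fun p hp => subset_tsupport _ (fun h0 => hp (hz p h0))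

def Faux (J : ℝ) (f : ℝ × ℝ → ℝ) : ℝ × ℝ → ℝ := fun p => J * f p

def Fvaux (u vt J : ℝ) (f : ℝ × ℝ → ℝ) : ℝ × ℝ → ℝ :=
  fun p => (p.1 - u) * Faux J f p + vt ^ 2 * fderiv ℝ (Faux J f) p (1, 0)

def Fmaux (vt m B J : ℝ) (f : ℝ × ℝ → ℝ) : ℝ × ℝ → ℝ :=
  fun p => 2 * p.2 * Faux J f p + 2 * p.2 * (m / B) * vt ^ 2 * fderiv ℝ (Faux J f) p (0, 1)

def Kaux (u vt m B J : ℝ) (f : ℝ × ℝ → ℝ) : ℝ × ℝ → ℝ :=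
  fun p => (p.1 ^ 2 / 2 + p.2 * B / m) * Fvaux u vt J f p - p.1 * vt ^ 2 * Faux J f p

def Laux (vt m B J : ℝ) (f : ℝ × ℝ → ℝ) : ℝ × ℝ → ℝ :=
  fun p => (p.1 ^ 2 / 2 + p.2 * B / m) * Fmaux vt m B J f p - 2 * p.2 * vt ^ 2 * Faux J f p

end Aux

section Key
open Set Function

variable (ν u vt m B J : ℝ) (f : ℝ × ℝ → ℝ)

lemma key_pointwise (hm : 0 < m) (hB : 0 < B)
    (hf : ContDiff ℝ (⊤ : ℕ∞) f) (v μ : ℝ) :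
    (v ^ 2 / 2 + μ * B / m) * LBO ν u vt m B J f (v, μ)
      = ν * fderiv ℝ (Kaux u vt m B J f) (v, μ) (1, 0)
      + ν * fderiv ℝ (Laux vt m B J f) (v, μ) (0, 1)
      - ν * ((v ^ 2 - u * v + 2 * μ * B / m - 3 * vt ^ 2) * (J * f (v, μ))) := by
  have hone : (1 : WithTop ℕ∞) ≤ ((⊤ : ℕ∞) : WithTop ℕ∞) := by exact_mod_cast le_top
  have hsm : ContDiff ℝ ((⊤ : ℕ∞) : WithTop ℕ∞) f := hf.of_le (by simp)
  have hFc : ContDiff ℝ ((⊤ : ℕ∞) : WithTop ℕ∞) (Faux J f) := contDiff_const.mul hsm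
  have hFd : Differentiable ℝ (Faux J f) := hFc.differentiable (zero_lt_one.trans_le hone).ne'
  have hP1c := aux_contDiff_pd hFc (1, 0)
  have hP2c := aux_contDiff_pd hFc (0, 1)
  have hFvc : ContDiff ℝ ((⊤ : ℕ∞) : WithTop ℕ∞) (Fvaux u vt J f) :=
    ((contDiff_fst.sub contDiff_const).mul hFc).add (contDiff_const.mul hP1c)
  have hFmc : ContDiff ℝ ((⊤ : ℕ∞) : WithTop ℕ∞) (Fmaux vt m B J f) :=
    (((contDiff_const.mul contDiff_snd).mul hFc)).add
      ((((contDiff_const.mul contDiff_snd).mul contDiff_const).mul contDiff_const).mul hP2c)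
  have hFvd : Differentiable ℝ (Fvaux u vt J f) := hFvc.differentiable (zero_lt_one.trans_le hone).ne'
  have hFmd : Differentiable ℝ (Fmaux vt m B J f) := hFmc.differentiable (zero_lt_one.trans_le hone).ne'
  have hgc : ContDiff ℝ ((⊤ : ℕ∞) : WithTop ℕ∞) (fun p : ℝ × ℝ => p.1 ^ 2 / 2 + p.2 * B / m) :=
    ((contDiff_fst.pow 2).div_const 2).add ((contDiff_snd.mul contDiff_const).div_const m)
  have hKc : ContDiff ℝ ((⊤ : ℕ∞) : WithTop ℕ∞) (Kaux u vt m B J f) :=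
    (hgc.mul hFvc).sub ((contDiff_fst.mul contDiff_const).mul hFc)
  have hLc : ContDiff ℝ ((⊤ : ℕ∞) : WithTop ℕ∞) (Laux vt m B J f) :=
    (hgc.mul hFmc).sub (((contDiff_const.mul contDiff_snd).mul contDiff_const).mul hFc)
  have hKd : Differentiable ℝ (Kaux u vt m B J f) := hKc.differentiable (zero_lt_one.trans_le hone).ne'
  have hLd : Differentiable ℝ (Laux vt m B J f) := hLc.differentiable (zero_lt_one.trans_le hone).ne'
  have hd1F : ∀ a b : ℝ, deriv (fun w => J * f (w, b)) a = fderiv ℝ (Faux J f) (a, b) (1, 0) :=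
    fun a b => (aux_hasDerivAt_fst hFd a b).deriv
  have hd2F : ∀ a b : ℝ, deriv (fun w => J * f (a, w)) b = fderiv ℝ (Faux J f) (a, b) (0, 1) :=
    fun a b => (aux_hasDerivAt_snd hFd a b).deriv
  have e1 : (fun w => (w - u) * (J * f (w, μ)) + vt ^ 2 * deriv (fun w' => J * f (w', μ)) w)
      = fun w => Fvaux u vt J f (w, μ) := by
    funext w; rw [hd1F w μ]; rfl
  have e2 : (fun w => 2 * w * (J * f (v, w)) + 2 * w * (m / B) * vt ^ 2
        * deriv (fun w' => J * f (v, w')) w)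
      = fun w => Fmaux vt m B J f (v, w) := by
    funext w; rw [hd2F v w]; rfl
  have q1 : deriv (fun w => Fvaux u vt J f (w, μ)) v
      = fderiv ℝ (Fvaux u vt J f) (v, μ) (1, 0) := (aux_hasDerivAt_fst hFvd v μ).deriv
  have q2 : deriv (fun w => Fmaux vt m B J f (v, w)) μ
      = fderiv ℝ (Fmaux vt m B J f) (v, μ) (0, 1) := (aux_hasDerivAt_snd hFmd v μ).deriv
  have hK1 : HasDerivAt (fun w => Kaux u vt m B J f (w, μ))
      (v * Fvaux u vt J f (v, μ)
        + (v ^ 2 / 2 + μ * B / m) * fderiv ℝ (Fvaux u vt J f) (v, μ) (1, 0)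
        - (1 * vt ^ 2 * Faux J f (v, μ) + v * vt ^ 2 * fderiv ℝ (Faux J f) (v, μ) (1, 0))) v := by
    have h1 : HasDerivAt (fun w : ℝ => w ^ 2 / 2 + μ * B / m) v v := by
      simpa using ((hasDerivAt_pow 2 v).div_const 2).add_const (μ * B / m)
    exact (h1.mul (aux_hasDerivAt_fst hFvd v μ)).sub
      (((hasDerivAt_id v).mul_const (vt ^ 2)).mul (aux_hasDerivAt_fst hFd v μ))
  have hL1 : HasDerivAt (fun w => Laux vt m B J f (v, w))
      (1 * B / m * Fmaux vt m B J f (v, μ)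
        + (v ^ 2 / 2 + μ * B / m) * fderiv ℝ (Fmaux vt m B J f) (v, μ) (0, 1)
        - (2 * 1 * vt ^ 2 * Faux J f (v, μ)
            + 2 * μ * vt ^ 2 * fderiv ℝ (Faux J f) (v, μ) (0, 1))) μ := by
    have h1 : HasDerivAt (fun w : ℝ => v ^ 2 / 2 + w * B / m) (1 * B / m) μ :=
      (((hasDerivAt_id μ).mul_const B).div_const m).const_add (v ^ 2 / 2)
    exact (h1.mul (aux_hasDerivAt_snd hFmd v μ)).sub
      ((((hasDerivAt_id μ).const_mul 2).mul_const (vt ^ 2)).mul (aux_hasDerivAt_snd hFd v μ))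
  have hD1K : fderiv ℝ (Kaux u vt m B J f) (v, μ) (1, 0)
      = v * Fvaux u vt J f (v, μ)
        + (v ^ 2 / 2 + μ * B / m) * fderiv ℝ (Fvaux u vt J f) (v, μ) (1, 0)
        - (1 * vt ^ 2 * Faux J f (v, μ) + v * vt ^ 2 * fderiv ℝ (Faux J f) (v, μ) (1, 0)) :=
    (aux_hasDerivAt_fst hKd v μ).unique hK1
  have hD2L : fderiv ℝ (Laux vt m B J f) (v, μ) (0, 1)
      = 1 * B / m * Fmaux vt m B J f (v, μ)
        + (v ^ 2 / 2 + μ * B / m) * fderiv ℝ (Fmaux vt m B J f) (v, μ) (0, 1)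
        - (2 * 1 * vt ^ 2 * Faux J f (v, μ)
            + 2 * μ * vt ^ 2 * fderiv ℝ (Faux J f) (v, μ) (0, 1)) :=
    (aux_hasDerivAt_snd hLd v μ).unique hL1
  simp only [LBO]
  rw [e1, e2, q1, q2, hD1K, hD2L]
  simp only [Fvaux, Fmaux, Faux]
  field_simp
  ring
end Key

section MainAux
open Set Function

lemma aux_hcs2 {f1 f2 h : ℝ × ℝ → ℝ} (h1 : HasCompactSupport f1) (h2 : HasCompactSupport f2)
    (hz : ∀ p, f1 p = 0 → f2 p = 0 → h p = 0) : HasCompactSupport h := by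
  have hsub : Function.support h ⊆ tsupport f1 ∪ tsupport f2 := by
    intro p hp
    by_contra hc
    rw [Set.mem_union] at hc
    push_neg at hc
    exact hp (hz p (image_eq_zero_of_notMem_tsupport hc.1) (image_eq_zero_of_notMem_tsupport hc.2))
  exact (h1.union h2).of_isClosed_subset isClosed_closure
    (closure_minimal hsub ((isClosed_tsupport f1).union (isClosed_tsupport f2)))

end MainAux

/-- The Lenard–Bernstein/Dougherty collision operator conserves energy:
`∫ (v∥²/2 + μB/m) J C[f] dv∥ dμ = 0`, provided `u∥` and `v_t` are defined by
`n u∥ = ∫ J v∥ f dw` and `n u∥² + 3 n v_t² = ∫ J (v∥² + 2μB/m) f dw`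
with `n = ∫ J f dw`. -/
theorem LBO_energy_conservation
    (ν u vt m B J : ℝ) (hν : 0 < ν) (hvt : 0 < vt) (hm : 0 < m) (hB : 0 < B)
    (hJ : J ≠ 0)
    (f : ℝ × ℝ → ℝ) (hf : ContDiff ℝ (⊤ : ℕ∞) f) (hsupp : HasCompactSupport f)
    (n : ℝ) (hn : n = ∫ v : ℝ, ∫ μ in Set.Ici (0 : ℝ), J * f (v, μ))
    (hu : n * u = ∫ v : ℝ, ∫ μ in Set.Ici (0 : ℝ), J * (v * f (v, μ)))
    (hvt2 : n * u ^ 2 + 3 * n * vt ^ 2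
      = ∫ v : ℝ, ∫ μ in Set.Ici (0 : ℝ), J * ((v ^ 2 + 2 * μ * B / m) * f (v, μ))) :
    ∫ v : ℝ, ∫ μ in Set.Ici (0 : ℝ),
      (v ^ 2 / 2 + μ * B / m) * LBO ν u vt m B J f (v, μ) = 0 := by
  have hone : (1 : WithTop ℕ∞) ≤ ((⊤ : ℕ∞) : WithTop ℕ∞) := by exact_mod_cast le_top
  have hsm : ContDiff ℝ ((⊤ : ℕ∞) : WithTop ℕ∞) f := hf.of_le (by simp)
  have hfc : Continuous f := hf.continuous
  have hFc : ContDiff ℝ ((⊤ : ℕ∞) : WithTop ℕ∞) (Faux J f) := contDiff_const.mul hsm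
  have hP1c := aux_contDiff_pd hFc (1, 0)
  have hP2c := aux_contDiff_pd hFc (0, 1)
  have hFvc : ContDiff ℝ ((⊤ : ℕ∞) : WithTop ℕ∞) (Fvaux u vt J f) :=
    ((contDiff_fst.sub contDiff_const).mul hFc).add (contDiff_const.mul hP1c)
  have hFmc : ContDiff ℝ ((⊤ : ℕ∞) : WithTop ℕ∞) (Fmaux vt m B J f) :=
    (((contDiff_const.mul contDiff_snd).mul hFc)).add
      ((((contDiff_const.mul contDiff_snd).mul contDiff_const).mul contDiff_const).mul hP2c)
  have hgc : ContDiff ℝ ((⊤ : ℕ∞) : WithTop ℕ∞) (fun p : ℝ × ℝ => p.1 ^ 2 / 2 + p.2 * B / m) :=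
    ((contDiff_fst.pow 2).div_const 2).add ((contDiff_snd.mul contDiff_const).div_const m)
  have hKc : ContDiff ℝ ((⊤ : ℕ∞) : WithTop ℕ∞) (Kaux u vt m B J f) :=
    (hgc.mul hFvc).sub ((contDiff_fst.mul contDiff_const).mul hFc)
  have hLc : ContDiff ℝ ((⊤ : ℕ∞) : WithTop ℕ∞) (Laux vt m B J f) :=
    (hgc.mul hFmc).sub (((contDiff_const.mul contDiff_snd).mul contDiff_const).mul hFc)
  have hKd : Differentiable ℝ (Kaux u vt m B J f) := hKc.differentiable (zero_lt_one.trans_le hone).ne'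
  have hLd : Differentiable ℝ (Laux vt m B J f) := hLc.differentiable (zero_lt_one.trans_le hone).ne'
  -- compact supports
  have hFs : HasCompactSupport (Faux J f) := aux_hcs hsupp (fun p h0 => by simp [Faux, h0])
  have hP1s : HasCompactSupport (fun p : ℝ × ℝ => fderiv ℝ (Faux J f) p (1, 0)) :=
    hFs.fderiv_apply ℝ (1, 0)
  have hP2s : HasCompactSupport (fun p : ℝ × ℝ => fderiv ℝ (Faux J f) p (0, 1)) :=
    hFs.fderiv_apply ℝ (0, 1)
  have hKs : HasCompactSupport (Kaux u vt m B J f) := by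
    refine aux_hcs2 hsupp hP1s (fun p h0 h1 => ?_)
    simp [Kaux, Fvaux, Faux, h0, h1]
  have hLs : HasCompactSupport (Laux vt m B J f) := by
    refine aux_hcs2 hsupp hP2s (fun p h0 h1 => ?_)
    simp [Laux, Fmaux, Faux, h0, h1]
  -- the three pieces
  have hac : Continuous (fun p : ℝ × ℝ => fderiv ℝ (Kaux u vt m B J f) p (1, 0)) :=
    (aux_contDiff_pd hKc (1, 0)).continuous
  have has : HasCompactSupport (fun p : ℝ × ℝ => fderiv ℝ (Kaux u vt m B J f) p (1, 0)) :=
    hKs.fderiv_apply ℝ (1, 0)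
  have hbc : Continuous (fun p : ℝ × ℝ => fderiv ℝ (Laux vt m B J f) p (0, 1)) :=
    (aux_contDiff_pd hLc (0, 1)).continuous
  have hbs : HasCompactSupport (fun p : ℝ × ℝ => fderiv ℝ (Laux vt m B J f) p (0, 1)) :=
    hLs.fderiv_apply ℝ (0, 1)
  have hcc : Continuous (fun p : ℝ × ℝ =>
      (p.1 ^ 2 - u * p.1 + 2 * p.2 * B / m - 3 * vt ^ 2) * (J * f p)) := by fun_prop
  have hcs : HasCompactSupport (fun p : ℝ × ℝ =>
      (p.1 ^ 2 - u * p.1 + 2 * p.2 * B / m - 3 * vt ^ 2) * (J * f p)) :=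
    aux_hcs hsupp (fun p h0 => by simp [h0])
  have hia := aux_integrable_pi hac has
  have hib := aux_integrable_pi hbc hbs
  have hic := aux_integrable_pi hcc hcs
  -- Ia
  have Ia : ∫ p : ℝ × ℝ, fderiv ℝ (Kaux u vt m B J f) p (1, 0)
      ∂((volume : Measure ℝ).prod ((volume : Measure ℝ).restrict (Set.Ici 0))) = 0 := by
    rw [integral_prod_symm _ hia]
    have h0 : ∀ y : ℝ, ∫ x : ℝ, fderiv ℝ (Kaux u vt m B J f) (x, y) (1, 0) = 0 := by
      intro y
      have hsl : (fun x => fderiv ℝ (Kaux u vt m B J f) (x, y) (1, 0))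
          = deriv (fun x => Kaux u vt m B J f (x, y)) := by
        funext x; exact ((aux_hasDerivAt_fst hKd x y).deriv).symm
      rw [hsl]
      exact aux_integral_deriv_zero (aux_slice_contDiff_fst hKc y) (aux_slice_supp_fst hKs y)
    simp_rw [h0]
    simp
  -- Ib
  have Ib : ∫ p : ℝ × ℝ, fderiv ℝ (Laux vt m B J f) p (0, 1)
      ∂((volume : Measure ℝ).prod ((volume : Measure ℝ).restrict (Set.Ici 0))) = 0 := by
    rw [integral_prod _ hib]
    have h0 : ∀ x : ℝ, ∫ y in Set.Ici (0 : ℝ), fderiv ℝ (Laux vt m B J f) (x, y) (0, 1) = 0 := by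
      intro x
      have hsl : (fun y => fderiv ℝ (Laux vt m B J f) (x, y) (0, 1))
          = deriv (fun y => Laux vt m B J f (x, y)) := by
        funext y; exact ((aux_hasDerivAt_snd hLd x y).deriv).symm
      rw [hsl, aux_integral_Ici_deriv (aux_slice_contDiff_snd hLc x) (aux_slice_supp_snd hLs x)]
      simp [Laux, Fmaux]
    simp_rw [h0]
    simp
  -- Ic
  have Ic : ∫ p : ℝ × ℝ, (p.1 ^ 2 - u * p.1 + 2 * p.2 * B / m - 3 * vt ^ 2) * (J * f p)
      ∂((volume : Measure ℝ).prod ((volume : Measure ℝ).restrict (Set.Ici 0))) = 0 := by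
    have hc1 : Integrable (fun p : ℝ × ℝ => J * ((p.1 ^ 2 + 2 * p.2 * B / m) * f p))
        ((volume : Measure ℝ).prod ((volume : Measure ℝ).restrict (Set.Ici 0))) :=
      aux_integrable_pi (by fun_prop) (aux_hcs hsupp (fun p h0 => by simp [h0]))
    have hc2 : Integrable (fun p : ℝ × ℝ => J * (p.1 * f p))
        ((volume : Measure ℝ).prod ((volume : Measure ℝ).restrict (Set.Ici 0))) :=
      aux_integrable_pi (by fun_prop) (aux_hcs hsupp (fun p h0 => by simp [h0]))
    have hc3 : Integrable (fun p : ℝ × ℝ => J * f p)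
        ((volume : Measure ℝ).prod ((volume : Measure ℝ).restrict (Set.Ici 0))) :=
      aux_integrable_pi (by fun_prop) (aux_hcs hsupp (fun p h0 => by simp [h0]))
    have e1 : (∫ p : ℝ × ℝ, J * ((p.1 ^ 2 + 2 * p.2 * B / m) * f p)
        ∂((volume : Measure ℝ).prod ((volume : Measure ℝ).restrict (Set.Ici 0))))
        = ∫ v : ℝ, ∫ μ in Set.Ici (0 : ℝ), J * ((v ^ 2 + 2 * μ * B / m) * f (v, μ)) :=
      integral_prod _ hc1
    have e2 : (∫ p : ℝ × ℝ, J * (p.1 * f p)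
        ∂((volume : Measure ℝ).prod ((volume : Measure ℝ).restrict (Set.Ici 0))))
        = ∫ v : ℝ, ∫ μ in Set.Ici (0 : ℝ), J * (v * f (v, μ)) :=
      integral_prod _ hc2
    have e3 : (∫ p : ℝ × ℝ, J * f p
        ∂((volume : Measure ℝ).prod ((volume : Measure ℝ).restrict (Set.Ici 0))))
        = ∫ v : ℝ, ∫ μ in Set.Ici (0 : ℝ), J * f (v, μ) :=
      integral_prod _ hc3
    have split : ∀ p : ℝ × ℝ,
        (p.1 ^ 2 - u * p.1 + 2 * p.2 * B / m - 3 * vt ^ 2) * (J * f p)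
          = J * ((p.1 ^ 2 + 2 * p.2 * B / m) * f p) - u * (J * (p.1 * f p))
            - 3 * vt ^ 2 * (J * f p) := fun p => by ring
    have hsub1 : Integrable (fun p : ℝ × ℝ =>
        J * ((p.1 ^ 2 + 2 * p.2 * B / m) * f p) - u * (J * (p.1 * f p)))
        ((volume : Measure ℝ).prod ((volume : Measure ℝ).restrict (Set.Ici 0))) :=
      hc1.sub (hc2.const_mul u)
    have hmul2 : Integrable (fun p : ℝ × ℝ => u * (J * (p.1 * f p)))
        ((volume : Measure ℝ).prod ((volume : Measure ℝ).restrict (Set.Ici 0))) :=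
      hc2.const_mul u
    have hmul3 : Integrable (fun p : ℝ × ℝ => 3 * vt ^ 2 * (J * f p))
        ((volume : Measure ℝ).prod ((volume : Measure ℝ).restrict (Set.Ici 0))) :=
      hc3.const_mul (3 * vt ^ 2)
    simp_rw [split]
    rw [integral_sub hsub1 hmul3, integral_sub hc1 hmul2, e1, integral_const_mul u,
      integral_const_mul (3 * vt ^ 2), e2, e3, ← hn, ← hu, ← hvt2]
    ring
  -- assemble
  have hXint : Integrable (Function.uncurry fun v μ : ℝ =>
      ν * fderiv ℝ (Kaux u vt m B J f) (v, μ) (1, 0)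
        + ν * fderiv ℝ (Laux vt m B J f) (v, μ) (0, 1)
        - ν * (((v, μ).1 ^ 2 - u * (v, μ).1 + 2 * (v, μ).2 * B / m - 3 * vt ^ 2)
            * (J * f (v, μ))))
      ((volume : Measure ℝ).prod ((volume : Measure ℝ).restrict (Set.Ici 0))) :=
    ((hia.const_mul ν).add (hib.const_mul ν)).sub (hic.const_mul ν)
  calc ∫ v : ℝ, ∫ μ in Set.Ici (0 : ℝ),
      (v ^ 2 / 2 + μ * B / m) * LBO ν u vt m B J f (v, μ)
      = ∫ v : ℝ, ∫ μ in Set.Ici (0 : ℝ),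
        (ν * fderiv ℝ (Kaux u vt m B J f) (v, μ) (1, 0)
          + ν * fderiv ℝ (Laux vt m B J f) (v, μ) (0, 1)
          - ν * ((v ^ 2 - u * v + 2 * μ * B / m - 3 * vt ^ 2) * (J * f (v, μ)))) := by
        simp_rw [key_pointwise ν u vt m B J f hm hB hf]
    _ = ∫ p : ℝ × ℝ,
        (ν * fderiv ℝ (Kaux u vt m B J f) p (1, 0)
          + ν * fderiv ℝ (Laux vt m B J f) p (0, 1)
          - ν * ((p.1 ^ 2 - u * p.1 + 2 * p.2 * B / m - 3 * vt ^ 2) * (J * f p)))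
        ∂((volume : Measure ℝ).prod ((volume : Measure ℝ).restrict (Set.Ici 0))) :=
      integral_integral hXint
    _ = 0 := by
        have hadd : Integrable (fun p : ℝ × ℝ =>
            ν * fderiv ℝ (Kaux u vt m B J f) p (1, 0)
              + ν * fderiv ℝ (Laux vt m B J f) p (0, 1))
            ((volume : Measure ℝ).prod ((volume : Measure ℝ).restrict (Set.Ici 0))) :=
          (hia.const_mul ν).add (hib.const_mul ν)
        have hmc : Integrable (fun p : ℝ × ℝ =>
            ν * ((p.1 ^ 2 - u * p.1 + 2 * p.2 * B / m - 3 * vt ^ 2) * (J * f p)))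
            ((volume : Measure ℝ).prod ((volume : Measure ℝ).restrict (Set.Ici 0))) :=
          hic.const_mul ν
        have hma : Integrable (fun p : ℝ × ℝ => ν * fderiv ℝ (Kaux u vt m B J f) p (1, 0))
            ((volume : Measure ℝ).prod ((volume : Measure ℝ).restrict (Set.Ici 0))) :=
          hia.const_mul ν
        have hmb : Integrable (fun p : ℝ × ℝ => ν * fderiv ℝ (Laux vt m B J f) p (0, 1))
            ((volume : Measure ℝ).prod ((volume : Measure ℝ).restrict (Set.Ici 0))) :=
          hib.const_mul ν
        rw [integral_sub hadd hmc, integral_add hma hmb, integral_const_mul ν,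
          integral_const_mul ν, integral_const_mul ν, Ia, Ib, Ic]
        ring
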